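/- The Hilbert flying saucer X has exactly one end with basepoint 0: for every r > 0, the set { x ∈ X : d(x,0) > r } is path-connected. (For any two points u, v ∈ X with ‖u‖, ‖v‖ > r, one may connect them within X staying at norm > r, using that each sphere { x ∈ X : ‖x‖ = s } for s ≤ 1 intersected with X is path-connected through high-index coordinates.) -/

import Mathlib

/-!
The saucer is star-shaped about `0`, so its length metric measured from `0` is the norm and
the complement of a ball is `{x ∈ X : ‖x‖ > r}`. A point of it is shrunk radially and then
rotated, inside its disk, onto the axis of a far coordinate on which it is almost zero; two
points `c • unitVec M`, `c' • unitVec M'` are joined by rotating both onto a common farther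
axis and moving radially along it. So every such complement is path-connected, hence is its own unique
component, and the saucer has exactly one end.
-/

/-- `ℓ²`, the Hilbert space of square-summable real sequences. -/
noncomputable abbrev ell2 : Type := lp (fun _ : ℕ => ℝ) 2

/-- The disk `Y_i` (here indexed from `0`, so `saucerY i` is the paper's `Y_{i+1}`):
elements of norm at most `i+1` whose first `i` coordinates vanish. -/
def saucerY (i : ℕ) : Set ell2 :=
  {x : ell2 | ‖x‖ ≤ (i : ℝ) + 1 ∧ ∀ j < i, x j = 0}

/-- The Hilbert flying saucer `X = ⋃ᵢ Yᵢ ⊆ ℓ²`. -/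
def saucer : Set ell2 := ⋃ i : ℕ, saucerY i

/-- The induced length (inner) metric on a subset `X` of a normed space: the infimum of
lengths (total variations) of continuous paths in `X` joining `u` to `v`. -/
noncomputable def lengthDist {E : Type*} [NormedAddCommGroup E] [NormedSpace ℝ E]
    (X : Set E) (u v : E) : ENNReal :=
  ⨅ (γ : ℝ → E) (_ : ContinuousOn γ (Set.Icc 0 1)) (_ : γ 0 = u) (_ : γ 1 = v)
    (_ : Set.MapsTo γ (Set.Icc 0 1) X), eVariationOn γ (Set.Icc 0 1)

/-- An end of the metric subspace `(X, lengthDist X)` of a normed space, with basepoint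
`o ∈ X`: a nested sequence `U n` of connected components of the complement in `X` of
the closed ball of radius `n` about `o`. -/
def IsEndL {E : Type*} [NormedAddCommGroup E] [NormedSpace ℝ E]
    (X : Set E) (o : E) (U : ℕ → Set E) : Prop :=
  (∀ n : ℕ, ∃ x ∈ X, (n : ENNReal) < lengthDist X o x ∧
    U n = connectedComponentIn {y ∈ X | (n : ENNReal) < lengthDist X o y} x) ∧
  ∀ n : ℕ, U (n + 1) ⊆ U n

open Set Filter Topology RealInnerProductSpace

theorem lengthDist_eq_edist_of_segment_subset {E : Type*} [NormedAddCommGroup E]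
    [NormedSpace ℝ E] {X : Set E} {u v : E} (h : segment ℝ u v ⊆ X) :
    lengthDist X u v = edist u v := by
  refine le_antisymm ?_ ?_
  · have hvar : eVariationOn (AffineMap.lineMap u v : ℝ → E) (Icc 0 1) ≤ edist u v := by
      calc eVariationOn (AffineMap.lineMap u v : ℝ → E) (Icc 0 1)
          ≤ nndist u v * eVariationOn id (Icc (0 : ℝ) 1) :=
            (lipschitzWith_lineMap u v).lipschitzOnWith.comp_eVariationOn_le (mapsTo_id _)
        _ = edist u v := by simp
    refine iInf_le_of_le _ <| iInf_le_of_le (AffineMap.lineMap_continuous).continuousOn <|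
      iInf_le_of_le (AffineMap.lineMap_apply_zero u v) <|
      iInf_le_of_le (AffineMap.lineMap_apply_one u v) <| iInf_le_of_le ?_ hvar
    rw [segment_eq_image_lineMap] at h
    exact fun t ht => h (mem_image_of_mem _ ht)
  · refine le_iInf fun γ => le_iInf fun _ => le_iInf fun h₀ => le_iInf fun h₁ =>
      le_iInf fun _ => ?_
    rw [← h₀, ← h₁]
    exact eVariationOn.edist_le γ (left_mem_Icc.2 zero_le_one) (right_mem_Icc.2 zero_le_one)

theorem norm_cos_smul_add_sin_smul_sq {E : Type*} [NormedAddCommGroup E]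
    [InnerProductSpace ℝ E] {u v : E} (hu : ‖u‖ = 1) (hv : ‖v‖ = 1) (θ : ℝ) :
    ‖Real.cos θ • u + Real.sin θ • v‖ ^ 2 = 1 + Real.sin (2 * θ) * ⟪u, v⟫ := by
  rw [norm_add_sq_real, norm_smul, norm_smul, real_inner_smul_left, real_inner_smul_right,
    hu, hv, Real.sin_two_mul, Real.norm_eq_abs, Real.norm_eq_abs]
  nlinarith [sq_abs (Real.cos θ), sq_abs (Real.sin θ), Real.cos_sq_add_sin_sq θ]

def vanishingBelow (i : ℕ) : Submodule ℝ ell2 where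
  carrier := {x | ∀ j < i, x j = 0}
  add_mem' hx hy j hj := by simp [hx j hj, hy j hj]
  zero_mem' _ _ := rfl
  smul_mem' c x hx j hj := by simp [hx j hj]

theorem mem_vanishingBelow {i : ℕ} {x : ell2} : x ∈ vanishingBelow i ↔ ∀ j < i, x j = 0 :=
  Iff.rfl

theorem saucerY_eq (i : ℕ) : saucerY i = Metric.closedBall 0 (i + 1) ∩ vanishingBelow i := by
  ext x
  simp [saucerY, mem_vanishingBelow]

theorem starConvex_saucer : StarConvex ℝ 0 saucer :=
  starConvex_iUnion fun i => by
    rw [saucerY_eq]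
    exact ((convex_closedBall _ _).inter (Submodule.convex _)).starConvex
      ⟨Metric.mem_closedBall_self (by positivity), zero_mem _⟩

theorem lengthDist_saucer_zero {x : ell2} (hx : x ∈ saucer) :
    lengthDist saucer 0 x = ENNReal.ofReal ‖x‖ := by
  rw [lengthDist_eq_edist_of_segment_subset (starConvex_saucer.segment_subset hx),
    edist_zero_left, ofReal_norm, enorm_eq_nnnorm]

def saucerFar (r : ℝ) : Set ell2 := {x ∈ saucer | r < ‖x‖}

theorem setOf_ofReal_lt_lengthDist_saucer {r : ℝ} (hr : 0 ≤ r) :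
    {x | x ∈ saucer ∧ ENNReal.ofReal r < lengthDist saucer 0 x} = saucerFar r := by
  ext x
  refine and_congr_right fun hx => ?_
  rw [lengthDist_saucer_zero hx, ENNReal.ofReal_lt_ofReal_iff_of_nonneg hr]

theorem saucerFar_anti : Antitone saucerFar :=
  fun _ _ hrs _ hx => ⟨hx.1, hrs.trans_lt hx.2⟩

theorem mem_saucerFar {r : ℝ} {i : ℕ} {x : ell2} (hx : x ∈ vanishingBelow i) (hr : r < ‖x‖)
    (hi : ‖x‖ ≤ i + 1) : x ∈ saucerFar r :=
  ⟨mem_iUnion.2 ⟨i, hi, hx⟩, hr⟩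

theorem joinedIn_saucerFar_smul {r c d : ℝ} {i : ℕ} {w : ell2} (hr : 0 ≤ r)
    (hw : w ∈ vanishingBelow i) (hw₁ : ‖w‖ = 1) (hc : c ∈ Ioc r (i + 1))
    (hd : d ∈ Ioc r (i + 1)) : JoinedIn (saucerFar r) (c • w) (d • w) := by
  refine JoinedIn.of_segment_subset ?_
  rintro _ ⟨a, b, ha, hb, hab, rfl⟩
  have hs : a * c + b * d ∈ Ioc r (i + 1) := convex_Ioc r (i + 1) hc hd ha hb hab
  have hnorm : ‖(a * c + b * d) • w‖ = a * c + b * d := by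
    rw [norm_smul, hw₁, mul_one, Real.norm_of_nonneg (by linarith [hs.1])]
  rw [smul_smul, smul_smul, ← add_smul]
  exact mem_saucerFar (Submodule.smul_mem _ _ hw) (hnorm.symm ▸ hs.1) (hnorm.symm ▸ hs.2)

-- Rotating `w` into `w'` in their plane changes the squared norm by at most `|⟪w, w'⟫|`.
theorem joinedIn_saucerFar_rotate {r c : ℝ} {i : ℕ} {w w' : ell2}
    (hw : w ∈ vanishingBelow i) (hw' : w' ∈ vanishingBelow i) (hw₁ : ‖w‖ = 1)
    (hw₁' : ‖w'‖ = 1) (hlow : r ^ 2 < c ^ 2 * (1 - |⟪w, w'⟫|))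
    (hhigh : c ^ 2 * (1 + |⟪w, w'⟫|) ≤ (i + 1) ^ 2) :
    JoinedIn (saucerFar r) (c • w) (c • w') := by
  set γ : ℝ → ell2 := fun t =>
    c • (Real.cos (t * (Real.pi / 2)) • w + Real.sin (t * (Real.pi / 2)) • w')
  refine JoinedIn.ofLine (f := γ) (by fun_prop) (by simp [γ]) (by simp [γ]) ?_
  rintro _ ⟨t, -, rfl⟩
  set θ := t * (Real.pi / 2)
  have hsq : ‖γ t‖ ^ 2 = c ^ 2 * (1 + Real.sin (2 * θ) * ⟪w, w'⟫) := by
    rw [norm_smul, mul_pow, norm_cos_smul_add_sin_smul_sq hw₁ hw₁', Real.norm_eq_abs, sq_abs]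
  have hcross : |Real.sin (2 * θ) * ⟪w, w'⟫| ≤ |⟪w, w'⟫| := by
    rw [abs_mul]
    exact mul_le_of_le_one_left (abs_nonneg _) (Real.abs_sin_le_one _)
  obtain ⟨hcross₁, hcross₂⟩ := abs_le.1 hcross
  refine mem_saucerFar (i := i) ?_ ?_ ?_
  · exact Submodule.smul_mem _ _ (add_mem (Submodule.smul_mem _ _ hw)
      (Submodule.smul_mem _ _ hw'))
  · refine lt_of_pow_lt_pow_left₀ 2 (norm_nonneg _) ?_
    rw [hsq]
    nlinarith [sq_nonneg c]
  · refine (pow_le_pow_iff_left₀ (norm_nonneg _) (by positivity) two_ne_zero).1 ?_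
    rw [hsq]
    nlinarith [sq_nonneg c]

theorem eventually_abs_apply_lt (x : ell2) {ε : ℝ} (hε : 0 < ε) :
    ∀ᶠ n in atTop, |x n| < ε := by
  have hsum := (lp.memℓp x).summable (by norm_num : 0 < (2 : ENNReal).toReal)
  filter_upwards [hsum.tendsto_atTop_zero.eventually (gt_mem_nhds (pow_pos hε 2))] with n hn
  rw [ENNReal.toReal_ofNat, Real.rpow_two, Real.norm_eq_abs] at hn
  exact (pow_lt_pow_iff_left₀ (abs_nonneg _) hε.le two_ne_zero).1 hn

noncomputable def unitVec (M : ℕ) : ell2 := lp.single 2 M 1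

theorem norm_unitVec (M : ℕ) : ‖unitVec M‖ = 1 := by
  simp [unitVec, lp.norm_single]

theorem inner_unitVec_right (x : ell2) (M : ℕ) : ⟪x, unitVec M⟫ = x M := by
  simp [unitVec, lp.inner_single_right]

theorem unitVec_apply_of_ne {M j : ℕ} (h : j ≠ M) : unitVec M j = 0 :=
  lp.single_apply_ne 2 M 1 h

theorem unitVec_mem_vanishingBelow {i M : ℕ} (h : i ≤ M) : unitVec M ∈ vanishingBelow i :=
  fun _ hj => unitVec_apply_of_ne (by omega)

theorem joinedIn_saucerFar_smul_unitVec_of_lt {r c : ℝ} {M K : ℕ} (hr : 0 ≤ r)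
    (hc : c ∈ Ioc r (M + 1)) (hMK : M < K) :
    JoinedIn (saucerFar r) (c • unitVec M) (c • unitVec K) := by
  have horth : ⟪unitVec M, unitVec K⟫ = 0 := by
    rw [inner_unitVec_right, unitVec_apply_of_ne hMK.ne']
  refine joinedIn_saucerFar_rotate (i := M) (unitVec_mem_vanishingBelow le_rfl)
    (unitVec_mem_vanishingBelow hMK.le) (norm_unitVec M) (norm_unitVec K) ?_ ?_ <;>
  · rw [horth, abs_zero]
    nlinarith [hc.1, hc.2]

theorem joinedIn_saucerFar_smul_unitVec {r c c' : ℝ} {M M' : ℕ} (hr : 0 ≤ r)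
    (hc : c ∈ Ioc r (M + 1)) (hc' : c' ∈ Ioc r (M' + 1)) :
    JoinedIn (saucerFar r) (c • unitVec M) (c' • unitVec M') := by
  set K := max M M' + 1
  have hK : ∀ {N : ℕ}, N ≤ K → Ioc r ((N : ℝ) + 1) ⊆ Ioc r (K + 1) := fun hN =>
    Ioc_subset_Ioc_right (by gcongr)
  exact (joinedIn_saucerFar_smul_unitVec_of_lt hr hc (by omega)).trans <|
    (joinedIn_saucerFar_smul hr (unitVec_mem_vanishingBelow le_rfl) (norm_unitVec K)
      (hK (by omega) hc) (hK (by omega) hc')).trans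
    (joinedIn_saucerFar_smul_unitVec_of_lt hr hc' (by omega)).symm

theorem exists_joinedIn_saucerFar_smul_unitVec {r : ℝ} (hr : 0 ≤ r) {x : ell2}
    (hx : x ∈ saucerFar r) :
    ∃ (c : ℝ) (M : ℕ), c ∈ Ioc r (M + 1) ∧ JoinedIn (saucerFar r) x (c • unitVec M) := by
  obtain ⟨hxX, hxr⟩ := hx
  obtain ⟨i, hxi, hxz⟩ := mem_iUnion.1 hxX
  set a := ‖x‖
  have ha : 0 < a := hr.trans_lt hxr
  set w := a⁻¹ • x
  have hw : w ∈ vanishingBelow i := Submodule.smul_mem _ _ hxz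
  have hw₁ : ‖w‖ = 1 := by rw [norm_smul, norm_inv, norm_norm, inv_mul_cancel₀ ha.ne']
  obtain ⟨b, hrb, hba⟩ := exists_between hxr
  have hb : b ∈ Ioc r (i + 1) := ⟨hrb, hba.le.trans hxi⟩
  have hx_eq : x = a • w := by rw [smul_inv_smul₀ ha.ne']
  set δ := min (b ^ 2 - r ^ 2) ((i + 1) ^ 2 - b ^ 2)
  have hδ : 0 < δ := lt_min (by nlinarith) (by nlinarith)
  obtain ⟨M, hiM, hwM⟩ := ((eventually_ge_atTop i).and
    (eventually_abs_apply_lt w (div_pos hδ (pow_pos (hr.trans_lt hb.1) 2)))).exists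
  have hbwM : b ^ 2 * |w M| < δ := by
    rwa [lt_div_iff₀' (pow_pos (hr.trans_lt hb.1) 2)] at hwM
  refine ⟨b, M, ⟨hb.1, hb.2.trans (by gcongr)⟩, ?_⟩
  rw [hx_eq]
  refine (joinedIn_saucerFar_smul hr hw hw₁ ⟨hxr, hxi⟩ hb).trans ?_
  refine joinedIn_saucerFar_rotate hw (unitVec_mem_vanishingBelow hiM) hw₁ (norm_unitVec M) ?_ ?_
  · rw [inner_unitVec_right]
    linarith [min_le_left (b ^ 2 - r ^ 2) ((i + 1) ^ 2 - b ^ 2)]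
  · rw [inner_unitVec_right]
    linarith [min_le_right (b ^ 2 - r ^ 2) ((i + 1) ^ 2 - b ^ 2)]

theorem isPathConnected_saucerFar {r : ℝ} (hr : 0 ≤ r) : IsPathConnected (saucerFar r) := by
  refine isPathConnected_iff.2 ⟨⟨(r + 1) • unitVec ⌈r⌉₊, ?_⟩, fun x hx y hy => ?_⟩
  · refine mem_saucerFar (i := ⌈r⌉₊) (Submodule.smul_mem _ _ (unitVec_mem_vanishingBelow le_rfl))
      ?_ ?_ <;> rw [norm_smul, norm_unitVec, mul_one, Real.norm_of_nonneg (by linarith)]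
    · linarith
    · linarith [Nat.le_ceil r]
  obtain ⟨c, M, hc, hxc⟩ := exists_joinedIn_saucerFar_smul_unitVec hr hx
  obtain ⟨c', M', hc', hyc⟩ := exists_joinedIn_saucerFar_smul_unitVec hr hy
  exact hxc.trans ((joinedIn_saucerFar_smul_unitVec hr hc hc').trans hyc.symm)

theorem connectedComponentIn_saucerFar {r : ℝ} (hr : 0 ≤ r) {x : ell2}
    (hx : x ∈ saucerFar r) : connectedComponentIn (saucerFar r) x = saucerFar r :=
  (isPathConnected_saucerFar hr).isConnected.isPreconnected.connectedComponentIn hx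

/-- The Hilbert flying saucer has exactly one end (basepoint `0`): for every `r > 0`,
the set `{x ∈ X : d(x,0) > r}` is path-connected. -/
theorem stmt_19 :
    (∀ r : ℝ, 0 < r →
      IsPathConnected {x : ell2 | x ∈ saucer ∧ ENNReal.ofReal r < lengthDist saucer 0 x}) ∧
    ∃! U : ℕ → Set ell2, IsEndL saucer 0 U := by
  have hfar : ∀ n : ℕ, {y ∈ saucer | (n : ENNReal) < lengthDist saucer 0 y} = saucerFar n :=
    fun n => by simpa using setOf_ofReal_lt_lengthDist_saucer n.cast_nonneg
  refine ⟨fun r hr => setOf_ofReal_lt_lengthDist_saucer hr.le ▸ isPathConnected_saucerFar hr.le,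
    fun n => saucerFar n, ⟨fun n => ?_, fun n => saucerFar_anti (by simp)⟩, fun U hU => ?_⟩
  · obtain ⟨x, hx⟩ := (isPathConnected_saucerFar n.cast_nonneg).nonempty
    have hx' : x ∈ {y ∈ saucer | (n : ENNReal) < lengthDist saucer 0 y} := hfar n ▸ hx
    exact ⟨x, hx'.1, hx'.2, by rw [hfar, connectedComponentIn_saucerFar n.cast_nonneg hx]⟩
  · funext n
    obtain ⟨x, hxX, hxn, hUn⟩ := hU.1 n
    rw [hUn, hfar, connectedComponentIn_saucerFar n.cast_nonneg (hfar n ▸ ⟨hxX, hxn⟩)]
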